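/- Let I = (y² − x³) ⊆ ℝ[x,y] and A = ℝ[x,y]/I. The polynomial x is nonnegative on V_ℝ(I), but its image in A is not strongly nonnegative at the point P = (0,0): the ℝ-algebra homomorphism φ : A → ℝ[ε]/(ε²) at P with φ(x) = −ε, φ(y) = 0 sends x to an element that is not nonnegative. Consequently, x is not a sum of squares modulo I. -/

import Mathlib

open MvPolynomial Polynomial

noncomputable section

/-- The ring `ℝ[ε]/(ε^m)`. -/
abbrev Eps (m : ℕ) : Type := AdjoinRoot ((Polynomial.X : Polynomial ℝ) ^ m)

/-- An element `a₀ + a₁ε + ⋯ + a_{m-1}ε^{m-1}` of `ℝ[ε]/(ε^m)` is nonnegative if it is zero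
or `a_N > 0` where `N = min {j : a_j ≠ 0}` (equivalently some, or any, polynomial
representative of it has positive lowest-order nonzero coefficient). -/
def EpsNonneg {m : ℕ} (z : Eps m) : Prop :=
  z = 0 ∨ ∃ p : Polynomial ℝ, AdjoinRoot.mk _ p = z ∧ 0 < p.coeff p.natTrailingDegree

/-- The real vanishing set `V_ℝ(I) ⊆ ℝⁿ` of an ideal `I ⊆ ℝ[x₁,…,xₙ]`. -/
def realVariety {n : ℕ} (I : Ideal (MvPolynomial (Fin n) ℝ)) : Set (Fin n → ℝ) :=
  {P | ∀ p ∈ I, MvPolynomial.eval P p = 0}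

/-- An `ℝ`-algebra homomorphism `φ : A → ℝ[ε]/(ε^m)` is at `P` if composing it with the
unique `ℝ`-algebra homomorphism `ℝ[ε]/(ε^m) → ℝ` gives evaluation at `P`; i.e. for every `p`,
`φ(p mod I)` agrees with `eval P p` modulo the ideal `(ε)`. -/
def AtPoint {n m : ℕ} (I : Ideal (MvPolynomial (Fin n) ℝ)) (P : Fin n → ℝ)
    (φ : (MvPolynomial (Fin n) ℝ ⧸ I) →ₐ[ℝ] Eps m) : Prop :=
  ∀ p : MvPolynomial (Fin n) ℝ,
    φ (Ideal.Quotient.mk I p) - algebraMap ℝ (Eps m) (MvPolynomial.eval P p)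
      ∈ Ideal.span {AdjoinRoot.root ((Polynomial.X : Polynomial ℝ) ^ m)}

/-- `f ∈ A = ℝ[x₁,…,xₙ]/I` is strongly nonnegative at `P` if for every `m` and every
`ℝ`-algebra homomorphism `φ : A → ℝ[ε]/(ε^m)` at `P`, `φ(f)` is nonnegative. -/
def StronglyNonnegAt {n : ℕ} (I : Ideal (MvPolynomial (Fin n) ℝ)) (P : Fin n → ℝ)
    (f : MvPolynomial (Fin n) ℝ ⧸ I) : Prop :=
  ∀ (m : ℕ) (φ : (MvPolynomial (Fin n) ℝ ⧸ I) →ₐ[ℝ] Eps m),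
    AtPoint I P φ → EpsNonneg (φ f)

/-- `f` is strongly nonnegative on `V(I)` if it is strongly nonnegative at every `P ∈ V_ℝ(I)`. -/
def StronglyNonneg {n : ℕ} (I : Ideal (MvPolynomial (Fin n) ℝ))
    (f : MvPolynomial (Fin n) ℝ ⧸ I) : Prop :=
  ∀ P ∈ realVariety I, StronglyNonnegAt I P f

/-- `f` is `k`-sos modulo `I`: `f ≡ Σᵢ gᵢ² (mod I)` with each `deg gᵢ ≤ k`. -/
def KSosMod {n : ℕ} (I : Ideal (MvPolynomial (Fin n) ℝ)) (k : ℕ)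
    (f : MvPolynomial (Fin n) ℝ) : Prop :=
  ∃ (r : ℕ) (g : Fin r → MvPolynomial (Fin n) ℝ),
    (∀ i, (g i).totalDegree ≤ k) ∧ f - ∑ i, (g i) ^ 2 ∈ I

/-- `f` is a sum of squares modulo `I` (no degree bound). -/
def SosMod {n : ℕ} (I : Ideal (MvPolynomial (Fin n) ℝ)) (f : MvPolynomial (Fin n) ℝ) : Prop :=
  ∃ (r : ℕ) (g : Fin r → MvPolynomial (Fin n) ℝ), f - ∑ i, (g i) ^ 2 ∈ I

/-- `I` is `(d,k)`-sos: every polynomial of degree at most `d` which is nonnegative on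
`V_ℝ(I)` is `k`-sos modulo `I`. -/
def IsDKSos {n : ℕ} (I : Ideal (MvPolynomial (Fin n) ℝ)) (d k : ℕ) : Prop :=
  ∀ f : MvPolynomial (Fin n) ℝ, f.totalDegree ≤ d →
    (∀ P ∈ realVariety I, 0 ≤ MvPolynomial.eval P f) → KSosMod I k f

/-- `I` is weakly `(1,k)`-sos: every polynomial of degree at most `1` whose image in
`A = ℝ[x]/I` is strongly nonnegative on `V(I)` is `k`-sos modulo `I`. -/
def WeaklyOneKSos {n : ℕ} (I : Ideal (MvPolynomial (Fin n) ℝ)) (k : ℕ) : Prop :=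
  ∀ f : MvPolynomial (Fin n) ℝ, f.totalDegree ≤ 1 →
    StronglyNonneg I (Ideal.Quotient.mk I f) → KSosMod I k f

/-- The maximal ideal `m_P ⊆ A = ℝ[x]/I` of functions vanishing at `P`. -/
def mIdeal {n : ℕ} (I : Ideal (MvPolynomial (Fin n) ℝ)) (P : Fin n → ℝ) :
    Ideal (MvPolynomial (Fin n) ℝ ⧸ I) :=
  Ideal.map (Ideal.Quotient.mk I) (RingHom.ker (MvPolynomial.eval P))

/-- A commutative ring is a regular local ring if it is Noetherian, local, and the dimension
of its cotangent space (equivalently, of its tangent space) over the residue field equals its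
Krull dimension. -/
def IsRegularLocal (R : Type) [CommRing R] : Prop :=
  IsNoetherianRing R ∧ ∃ _h : IsLocalRing R,
    (Module.finrank (IsLocalRing.ResidueField R) (IsLocalRing.CotangentSpace R) :
      WithBot (WithTop ℕ)) = ringKrullDim R

/-- `V(I)` is nonsingular at `P` if the localization of `A = ℝ[x]/I` at the maximal ideal
`m_P` is a regular local ring. -/
def IsNonsingularAt {n : ℕ} (I : Ideal (MvPolynomial (Fin n) ℝ)) (P : Fin n → ℝ) : Prop :=
  ∃ hp : (mIdeal I P).IsPrime, IsRegularLocal (@Localization.AtPrime _ _ (mIdeal I P) hp)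

/-- The tangent space of `V(I)` at `P`, viewed as the set of vectors `v ∈ ℝⁿ` such that there
is an `ℝ`-algebra homomorphism `A → ℝ[ε]/(ε²)` at `P` sending each `xᵢ` to `Pᵢ + vᵢ ε`. -/
def tangentVectors {n : ℕ} (I : Ideal (MvPolynomial (Fin n) ℝ)) (P : Fin n → ℝ) :
    Set (Fin n → ℝ) :=
  {v | ∃ φ : (MvPolynomial (Fin n) ℝ ⧸ I) →ₐ[ℝ] Eps 2,
    ∀ i : Fin n, φ (Ideal.Quotient.mk I (MvPolynomial.X i)) =
      algebraMap ℝ (Eps 2) (P i) + (v i) • AdjoinRoot.root ((Polynomial.X : Polynomial ℝ) ^ 2)}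

/-- `P ∈ V_ℝ(I)` is convex-singular: `P` is a singular point of `V(I)`, lies on the relative
boundary of `conv(V_ℝ(I))`, and the (affine) tangent space at `P` meets the relative interior
of `conv(V_ℝ(I))`. -/
def ConvexSingular {n : ℕ} (I : Ideal (MvPolynomial (Fin n) ℝ)) (P : Fin n → ℝ) : Prop :=
  ¬ IsNonsingularAt I P ∧
  P ∈ intrinsicFrontier ℝ (convexHull ℝ (realVariety I)) ∧
  ∃ v ∈ tangentVectors I P, P + v ∈ intrinsicInterior ℝ (convexHull ℝ (realVariety I))

/-- The `k`-th theta body of `I`. -/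
def thetaBody {n : ℕ} (I : Ideal (MvPolynomial (Fin n) ℝ)) (k : ℕ) : Set (Fin n → ℝ) :=
  {x | ∀ f : MvPolynomial (Fin n) ℝ, f.totalDegree ≤ 1 → KSosMod I k f →
    0 ≤ MvPolynomial.eval x f}

/-- `I` is `TH_k`-exact if the `k`-th theta body equals the closure of the convex hull of
`V_ℝ(I)`. -/
def ThetaExact {n : ℕ} (I : Ideal (MvPolynomial (Fin n) ℝ)) (k : ℕ) : Prop :=
  thetaBody I k = closure (convexHull ℝ (realVariety I))

/-- `I` is real radical: whenever `f^(2m) + Σᵢ gᵢ² ∈ I` for some `m ≥ 1`, we have `f ∈ I`. -/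
def IsRealRadical {n : ℕ} (I : Ideal (MvPolynomial (Fin n) ℝ)) : Prop :=
  ∀ f : MvPolynomial (Fin n) ℝ,
    (∃ m : ℕ, 1 ≤ m ∧ ∃ (r : ℕ) (g : Fin r → MvPolynomial (Fin n) ℝ),
      f ^ (2 * m) + ∑ i, (g i) ^ 2 ∈ I) → f ∈ I

/-- A formal power series is nonnegative if it is zero or its leading (lowest-order nonzero)
coefficient is positive. -/
def PSNonneg (F : PowerSeries ℝ) : Prop :=
  F = 0 ∨ ∃ N : ℕ, 0 < PowerSeries.coeff (R := ℝ) N F ∧ ∀ j < N, PowerSeries.coeff (R := ℝ) j F = 0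

/-- An `ℝ`-algebra homomorphism `φ : A → ℝ[[t]]` is at `P` if the preimage of the ideal `(t)`
is the maximal ideal of functions vanishing at `P`. -/
def PSAtPoint {n : ℕ} (I : Ideal (MvPolynomial (Fin n) ℝ)) (P : Fin n → ℝ)
    (φ : (MvPolynomial (Fin n) ℝ ⧸ I) →ₐ[ℝ] PowerSeries ℝ) : Prop :=
  ∀ p : MvPolynomial (Fin n) ℝ,
    (PowerSeries.constantCoeff (R := ℝ) (φ (Ideal.Quotient.mk I p)) = 0 ↔ MvPolynomial.eval P p = 0)

/-- The linear function induced by a polynomial `f` (of degree at most 1) on tangent vectors: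
`v ↦ Σᵢ (∂f/∂xᵢ) vᵢ`. -/
def linGrad {n : ℕ} (f : MvPolynomial (Fin n) ℝ) (v : Fin n → ℝ) : ℝ :=
  ∑ i : Fin n, MvPolynomial.eval (0 : Fin n → ℝ) (MvPolynomial.pderiv i f) * v i

end

/-! On the real cusp `y² = x³` we have `x³ = y² ≥ 0`, so `x ≥ 0`. Since `ε² = 0`, the
assignment `x ↦ -ε`, `y ↦ 0` satisfies `y² = x³` in `ℝ[ε]/(ε²)`: it is a tangent vector at the
singular origin along which `x` decreases, so `x` is not strongly nonnegative there. A sum of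
squares cannot behave like this, because a nonzero sum of squares of real polynomials has a
positive lowest coefficient; hence `x` is not a sum of squares modulo the ideal. -/

namespace Polynomial

theorem natTrailingDegree_eq_of_coeff {R : Type*} [Semiring R] {p : R[X]} {n : ℕ}
    (hlt : ∀ j < n, p.coeff j = 0) (hn : p.coeff n ≠ 0) : p.natTrailingDegree = n :=
  le_antisymm (natTrailingDegree_le_of_ne_zero hn)
    (le_natTrailingDegree (fun h => hn (by simp [h])) hlt)

theorem coeff_nonneg_of_le_natTrailingDegree {R : Type*} [Semiring R] [PartialOrder R]
    {p : R[X]} (hp : 0 ≤ p.trailingCoeff) {n : ℕ}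
    (hn : n ≤ p.natTrailingDegree) : 0 ≤ p.coeff n := by
  rcases hn.lt_or_eq with hn | rfl
  · exact (coeff_eq_zero_of_lt_natTrailingDegree hn).ge
  · exact hp

theorem coeff_natTrailingDegree_pos {R : Type*} [Semiring R] [PartialOrder R] {p : R[X]}
    (hp : 0 ≤ p.trailingCoeff) (hp0 : p ≠ 0) : 0 < p.coeff p.natTrailingDegree :=
  hp.lt_of_ne' (trailingCoeff_nonzero_iff_nonzero.mpr hp0)

section OrderedRing

variable {R : Type*} [CommRing R] [LinearOrder R] [IsStrictOrderedRing R] {p q : R[X]}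

theorem trailingCoeff_add_nonneg (hp : 0 ≤ p.trailingCoeff) (hq : 0 ≤ q.trailingCoeff) :
    0 ≤ (p + q).trailingCoeff := by
  rcases eq_or_ne p 0 with rfl | hp0
  · simpa using hq
  rcases eq_or_ne q 0 with rfl | hq0
  · simpa using hp
  set n := min p.natTrailingDegree q.natTrailingDegree
  have hlt : ∀ j < n, (p + q).coeff j = 0 := fun j hj => by
    rw [coeff_add, coeff_eq_zero_of_lt_natTrailingDegree (hj.trans_le (min_le_left _ _)),
      coeff_eq_zero_of_lt_natTrailingDegree (hj.trans_le (min_le_right _ _)), add_zero]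
  have hpn : 0 ≤ p.coeff n := coeff_nonneg_of_le_natTrailingDegree hp (min_le_left _ _)
  have hqn : 0 ≤ q.coeff n := coeff_nonneg_of_le_natTrailingDegree hq (min_le_right _ _)
  -- at `n` one of the two summands is a trailing coefficient, hence positive
  have hpos : 0 < (p + q).coeff n := by
    rw [coeff_add]
    rcases min_choice p.natTrailingDegree q.natTrailingDegree with h | h
    · have := coeff_natTrailingDegree_pos hp hp0
      rw [← h] at this
      linarith
    · have := coeff_natTrailingDegree_pos hq hq0
      rw [← h] at this
      linarith
  rw [trailingCoeff, natTrailingDegree_eq_of_coeff hlt hpos.ne']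
  exact hpos.le

theorem trailingCoeff_sq_nonneg (p : R[X]) : 0 ≤ (p ^ 2).trailingCoeff := by
  rw [sq, trailingCoeff_mul]
  exact mul_self_nonneg _

theorem trailingCoeff_sum_sq_nonneg {ι : Type*} (s : Finset ι) (p : ι → R[X]) :
    0 ≤ (∑ i ∈ s, p i ^ 2).trailingCoeff :=
  Finset.sum_induction _ (fun q : R[X] => 0 ≤ q.trailingCoeff)
    (fun _ _ => trailingCoeff_add_nonneg) (by simp) fun i _ => trailingCoeff_sq_nonneg (p i)

end OrderedRing

end Polynomial

theorem AdjoinRoot.root_X_pow_pow_self {R : Type*} [CommRing R] (m : ℕ) :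
    AdjoinRoot.root ((X : R[X]) ^ m) ^ m = 0 := by
  rw [← AdjoinRoot.mk_X, ← map_pow, AdjoinRoot.mk_self]

theorem epsNonneg_mk_of_trailingCoeff_nonneg {m : ℕ} {p : ℝ[X]} (hp : 0 ≤ p.trailingCoeff) :
    EpsNonneg (AdjoinRoot.mk ((X : ℝ[X]) ^ m) p) := by
  rcases eq_or_ne p 0 with rfl | hp0
  · exact Or.inl (map_zero _)
  · exact Or.inr ⟨p, rfl, coeff_natTrailingDegree_pos hp hp0⟩

theorem epsNonneg_sum_sq {m : ℕ} {ι : Type*} (s : Finset ι) (g : ι → Eps m) :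
    EpsNonneg (∑ i ∈ s, g i ^ 2) := by
  choose p hp using fun i => AdjoinRoot.mk_surjective (g i)
  simp only [← hp, ← map_pow, ← map_sum]
  exact epsNonneg_mk_of_trailingCoeff_nonneg (trailingCoeff_sum_sq_nonneg s p)

theorem SosMod.epsNonneg_apply {n m : ℕ} {I : Ideal (MvPolynomial (Fin n) ℝ)}
    {f : MvPolynomial (Fin n) ℝ} (hf : SosMod I f)
    (φ : (MvPolynomial (Fin n) ℝ ⧸ I) →ₐ[ℝ] Eps m) : EpsNonneg (φ (Ideal.Quotient.mk I f)) := by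
  obtain ⟨r, g, hg⟩ := hf
  rw [Ideal.Quotient.eq.mpr hg]
  simp only [map_sum, map_pow]
  exact epsNonneg_sum_sq _ _

theorem SosMod.stronglyNonnegAt {n : ℕ} {I : Ideal (MvPolynomial (Fin n) ℝ)}
    {f : MvPolynomial (Fin n) ℝ} (hf : SosMod I f) (P : Fin n → ℝ) :
    StronglyNonnegAt I P (Ideal.Quotient.mk I f) :=
  fun _ φ _ => hf.epsNonneg_apply φ

theorem coeff_zero_one_of_mk_eq_neg_root {R : Type*} [CommRing R] {m : ℕ} (hm : 2 ≤ m)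
    {p : R[X]} (hp : AdjoinRoot.mk ((X : R[X]) ^ m) p = -AdjoinRoot.root ((X : R[X]) ^ m)) :
    p.coeff 0 = 0 ∧ p.coeff 1 = -1 := by
  rw [← AdjoinRoot.mk_X, ← map_neg, AdjoinRoot.mk_eq_mk, sub_neg_eq_add, X_pow_dvd_iff] at hp
  have h0 := hp 0 (by omega)
  have h1 := hp 1 (by omega)
  simp only [Polynomial.coeff_add, coeff_X_zero, coeff_X_one] at h0 h1
  exact ⟨by simpa using h0, by linear_combination h1⟩

theorem not_epsNonneg_neg_root {m : ℕ} (hm : 2 ≤ m) :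
    ¬ EpsNonneg (-AdjoinRoot.root ((X : ℝ[X]) ^ m)) := by
  rintro (h | ⟨p, hp, hpos⟩)
  · have := (coeff_zero_one_of_mk_eq_neg_root hm (p := (0 : ℝ[X])) (by rw [map_zero, h])).2
    norm_num at this
  · obtain ⟨h0, h1⟩ := coeff_zero_one_of_mk_eq_neg_root hm hp
    have hdeg : p.natTrailingDegree = 1 :=
      natTrailingDegree_eq_of_coeff (by simpa using h0) (by simp [h1])
    rw [hdeg, h1] at hpos
    norm_num at hpos

theorem MvPolynomial.algHom_sub_mem_of_forall_X {R B σ : Type*} [CommRing R] [CommRing B]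
    [Algebra R B] {f g : MvPolynomial σ R →ₐ[R] B} {J : Ideal B}
    (h : ∀ i, f (MvPolynomial.X i) - g (MvPolynomial.X i) ∈ J) (p : MvPolynomial σ R) :
    f p - g p ∈ J := by
  have hcomp : (Ideal.Quotient.mkₐ R J).comp f = (Ideal.Quotient.mkₐ R J).comp g :=
    MvPolynomial.algHom_ext fun i => Ideal.Quotient.eq.mpr (h i)
  exact Ideal.Quotient.eq.mp (DFunLike.congr_fun hcomp p)

theorem atPoint_of_forall_X {n m : ℕ} {I : Ideal (MvPolynomial (Fin n) ℝ)} {P : Fin n → ℝ}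
    {φ : (MvPolynomial (Fin n) ℝ ⧸ I) →ₐ[ℝ] Eps m}
    (h : ∀ i, φ (Ideal.Quotient.mk I (MvPolynomial.X i)) - algebraMap ℝ (Eps m) (P i)
      ∈ Ideal.span {AdjoinRoot.root ((X : ℝ[X]) ^ m)}) :
    AtPoint I P φ :=
  MvPolynomial.algHom_sub_mem_of_forall_X (f := φ.comp (Ideal.Quotient.mkₐ ℝ I))
    (g := (Algebra.ofId ℝ (Eps m)).comp (MvPolynomial.aeval P)) (by simpa using h)

theorem nonneg_of_sq_eq_pow_three {R : Type*} [CommRing R] [LinearOrder R]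
    [IsStrictOrderedRing R] {a b : R} (h : b ^ 2 = a ^ 3) : 0 ≤ a :=
  (Odd.pow_nonneg_iff (by decide : Odd 3)).mp (h ▸ sq_nonneg b)

noncomputable abbrev cuspIdeal : Ideal (MvPolynomial (Fin 2) ℝ) :=
  Ideal.span {(MvPolynomial.X 1 : MvPolynomial (Fin 2) ℝ) ^ 2 - (MvPolynomial.X 0) ^ 3}

theorem sq_eq_pow_three_of_mem_realVariety_cuspIdeal {Q : Fin 2 → ℝ}
    (hQ : Q ∈ realVariety cuspIdeal) : Q 1 ^ 2 = Q 0 ^ 3 := by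
  simpa [sub_eq_zero] using hQ _ (Ideal.mem_span_singleton_self _)

noncomputable def cuspIdeal.lift {B : Type*} [CommRing B] [Algebra ℝ B] (v : Fin 2 → B)
    (hv : v 1 ^ 2 = v 0 ^ 3) : (MvPolynomial (Fin 2) ℝ ⧸ cuspIdeal) →ₐ[ℝ] B :=
  Ideal.Quotient.liftₐ _ (MvPolynomial.aeval v) fun a ha => by
    obtain ⟨c, rfl⟩ := Ideal.mem_span_singleton'.mp ha
    simp [hv]

theorem cuspIdeal.lift_mk_X {B : Type*} [CommRing B] [Algebra ℝ B] (v : Fin 2 → B)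
    (hv : v 1 ^ 2 = v 0 ^ 3) (i : Fin 2) :
    cuspIdeal.lift v hv (Ideal.Quotient.mk _ (MvPolynomial.X i)) = v i :=
  (Ideal.Quotient.liftₐ_apply _ _ _ _).trans (MvPolynomial.aeval_X v i)

/-- For `I = (y² − x³) ⊆ ℝ[x,y]`: the polynomial `x` is nonnegative on `V_ℝ(I)` but its
image in `A = ℝ[x,y]/I` is not strongly nonnegative at `P = (0,0)`, as witnessed by the
homomorphism `φ : A → ℝ[ε]/(ε²)` at `P` with `φ(x) = −ε`, `φ(y) = 0`; consequently `x` is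
not a sum of squares modulo `I`. -/
theorem cusp_example :
    ∀ I : Ideal (MvPolynomial (Fin 2) ℝ),
      I = Ideal.span {(MvPolynomial.X 1 : MvPolynomial (Fin 2) ℝ) ^ 2 -
        (MvPolynomial.X 0) ^ 3} →
    (∀ Q ∈ realVariety I, 0 ≤ MvPolynomial.eval Q (MvPolynomial.X 0 : MvPolynomial (Fin 2) ℝ)) ∧
    (∃ φ : (MvPolynomial (Fin 2) ℝ ⧸ I) →ₐ[ℝ] Eps 2,
      AtPoint I (0 : Fin 2 → ℝ) φ ∧
      φ (Ideal.Quotient.mk I (MvPolynomial.X 0)) =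
        - AdjoinRoot.root ((Polynomial.X : Polynomial ℝ) ^ 2) ∧
      φ (Ideal.Quotient.mk I (MvPolynomial.X 1)) = 0 ∧
      ¬ EpsNonneg (φ (Ideal.Quotient.mk I (MvPolynomial.X 0)))) ∧
    ¬ StronglyNonnegAt I (0 : Fin 2 → ℝ)
      (Ideal.Quotient.mk I (MvPolynomial.X 0 : MvPolynomial (Fin 2) ℝ)) ∧
    ¬ SosMod I (MvPolynomial.X 0 : MvPolynomial (Fin 2) ℝ) := by
  rintro I rfl
  set ε := AdjoinRoot.root ((X : ℝ[X]) ^ 2)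
  have hε : (0 : Eps 2) ^ 2 = (-ε) ^ 3 := by
    rw [show (-ε) ^ 3 = -(ε ^ 2 * ε) by ring, AdjoinRoot.root_X_pow_pow_self]
    simp
  set φ := cuspIdeal.lift ![-ε, 0] hε
  have hφ0 : φ (Ideal.Quotient.mk _ (MvPolynomial.X 0)) = -ε := cuspIdeal.lift_mk_X _ hε 0
  have hφ1 : φ (Ideal.Quotient.mk _ (MvPolynomial.X 1)) = 0 := cuspIdeal.lift_mk_X _ hε 1
  have hat : AtPoint cuspIdeal 0 φ := by
    refine atPoint_of_forall_X (Fin.forall_fin_two.mpr ⟨?_, ?_⟩)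
    · rw [hφ0, Pi.zero_apply, map_zero, sub_zero]
      exact neg_mem (Ideal.mem_span_singleton_self ε)
    · rw [hφ1, Pi.zero_apply, map_zero, sub_zero]
      exact zero_mem _
  have hneg : ¬ EpsNonneg (φ (Ideal.Quotient.mk _ (MvPolynomial.X 0))) :=
    hφ0 ▸ not_epsNonneg_neg_root le_rfl
  have hnotSN : ¬ StronglyNonnegAt cuspIdeal 0 (Ideal.Quotient.mk _ (MvPolynomial.X 0)) :=
    fun h => hneg (h 2 φ hat)
  exact ⟨fun Q hQ => by
      simpa using nonneg_of_sq_eq_pow_three (sq_eq_pow_three_of_mem_realVariety_cuspIdeal hQ),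
    ⟨φ, hat, hφ0, hφ1, hneg⟩, hnotSN, fun h => hnotSN (h.stronglyNonnegAt 0)⟩
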